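/- For every α > 1 there exists a nonempty compact set E ⊆ ℂ such that the Hausdorff dimension of E equals 0 and E satisfies condition (U)_{1,α}. -/

import Mathlib

/-!
Let `t₀ = 1/2` and `tₙ₊₁ = tₙ ^ α`, and let `E` be the set of sums `∑ εₙ tₙ` with `εₙ ∈ {0, 1}`.
Flipping the digit `εₙ₊₁` of a point of `E` moves it by exactly `tₙ₊₁ = tₙ ^ α`; choosing `n`
with `tₙ₊₁ ≤ r < tₙ` gives a point of `E` in the annulus `r ^ α ≤ |z - a| ≤ r`. On the other hand
`E` is covered by `2 ^ n` sets of diameter `O(tₙ)`, and `2 ^ n tₙ ^ d → 0` for every `d > 0`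
because `tₙ` decays doubly exponentially, so `E` has Hausdorff dimension `0`.
-/

open Metric Set

/-- A set `E ⊆ ℂ` satisfies condition `(U)_{1,α}`. -/
def CondU1 (E : Set ℂ) (α : ℝ) : Prop :=
  ∃ C > (0 : ℝ), ∃ r₀ > (0 : ℝ), ∀ a ∈ E, ∀ r ∈ Set.Ioo (0 : ℝ) r₀,
    ({z : ℂ | C * r ^ α ≤ dist z a ∧ dist z a ≤ r} ∩ E).Nonempty

open Filter Topology MeasureTheory
open scoped ENNReal

theorem dimH_eq_zero_of_finite_covers {X : Type*} [EMetricSpace X] [MeasurableSpace X]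
    [BorelSpace X] {s : Set X} {ι : ℕ → Type*} [∀ n, Fintype (ι n)] (T : ∀ n, ι n → Set X)
    (r : ℕ → ℝ≥0∞) (hr : Tendsto r atTop (𝓝 0)) (hdiam : ∀ n i, ediam (T n i) ≤ r n)
    (hcov : ∀ n, s ⊆ ⋃ i, T n i)
    (hsmall : ∀ d : ℝ, 0 < d →
      Tendsto (fun n => (Fintype.card (ι n) : ℝ≥0∞) * r n ^ d) atTop (𝓝 0)) :
    dimH s = 0 := by
  refine le_antisymm (ENNReal.le_of_forall_pos_le_add fun d hd _ => ?_) bot_le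
  rw [zero_add]
  refine dimH_le_of_hausdorffMeasure_ne_top (ne_top_of_le_ne_top ENNReal.zero_ne_top ?_)
  calc μH[d] s ≤ liminf (fun n => ∑ i, ediam (T n i) ^ (d : ℝ)) atTop :=
        Measure.hausdorffMeasure_le_liminf_sum _ s r hr T (.of_forall hdiam) (.of_forall hcov)
    _ ≤ liminf (fun n => (Fintype.card (ι n) : ℝ≥0∞) * r n ^ (d : ℝ)) atTop := by
        refine liminf_le_liminf (.of_forall fun n => ?_)
        rw [← nsmul_eq_mul, ← Finset.card_univ]
        exact Finset.sum_le_card_nsmul _ _ _ fun i _ =>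
          ENNReal.rpow_le_rpow (hdiam n i) d.coe_nonneg
    _ = 0 := (hsmall d (mod_cast hd)).liminf_eq

theorem exists_succ_le_lt_of_tendsto_zero {t : ℕ → ℝ} (ht : Tendsto t atTop (𝓝 0)) {r : ℝ}
    (hr0 : 0 < r) (hr : r < t 0) : ∃ n, t (n + 1) ≤ r ∧ r < t n := by
  by_contra! h
  have hlt : ∀ n, r < t n := fun n => by
    induction n with
    | zero => exact hr
    | succ n ih => exact lt_of_not_ge fun hle => (h n hle).not_gt ih
  obtain ⟨n, hn⟩ := (ht.eventually (gt_mem_nhds hr0)).exists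
  exact (hlt n).not_gt hn

noncomputable def digitSum (t : ℕ → ℝ) (ε : ℕ → Bool) : ℝ :=
  ∑' n, if ε n then t n else 0

section DigitSum

variable {t : ℕ → ℝ} (ht : ∀ n, 0 ≤ t n) (hs : Summable t)
include ht hs

theorem summable_digitSum_summand (ε : ℕ → Bool) : Summable fun n => if ε n then t n else 0 :=
  hs.of_nonneg_of_le (fun n => by split <;> simp [ht n]) (fun n => by split <;> simp [ht n])

theorem continuous_digitSum : Continuous (digitSum t) := by
  refine continuous_tsum (fun n => (continuous_of_discreteTopology
    (f := fun b : Bool => if b then t n else 0)).comp (continuous_apply n)) hs fun n ε => ?_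
  cases ε n <;> simp [abs_of_nonneg (ht n), ht n]

theorem abs_digitSum_sub_le {ε ε' : ℕ → Bool} {n : ℕ} (h : ∀ k < n, ε k = ε' k) :
    |digitSum t ε - digitSum t ε'| ≤ ∑' k, t (k + n) := by
  set D : ℕ → ℝ := fun k => (if ε k then t k else 0) - (if ε' k then t k else 0)
  have hε := summable_digitSum_summand ht hs ε
  have hε' := summable_digitSum_summand ht hs ε'
  have hD : digitSum t ε - digitSum t ε' = ∑' k, D (k + n) := by
    rw [digitSum, digitSum, ← hε.tsum_sub hε', ← (hε.sub hε').sum_add_tsum_nat_add n,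
      Finset.sum_eq_zero fun k hk => by simp [h k (Finset.mem_range.1 hk)], zero_add]
  rw [hD, ← Real.norm_eq_abs]
  refine tsum_of_norm_bounded ((summable_nat_add_iff n).2 hs).hasSum fun k => ?_
  simp only [D, Real.norm_eq_abs]
  cases ε (k + n) <;> cases ε' (k + n) <;> simp [abs_of_nonneg (ht _), ht _]

theorem abs_digitSum_update_not_sub (ε : ℕ → Bool) (n : ℕ) :
    |digitSum t (Function.update ε n (!ε n)) - digitSum t ε| = t n := by
  rw [digitSum, digitSum,
    ← (summable_digitSum_summand ht hs _).tsum_sub (summable_digitSum_summand ht hs ε),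
    tsum_eq_single n fun k hk => by simp [Function.update_of_ne hk], Function.update_self]
  cases ε n <;> simp [abs_of_nonneg (ht n)]

theorem condU1_range_digitSum {α : ℝ} (hα : 0 ≤ α)
    (h0 : 0 < t 0) (hsucc : ∀ n, t (n + 1) = t n ^ α) :
    CondU1 (range fun ε => (digitSum t ε : ℂ)) α := by
  refine ⟨1, one_pos, t 0, h0, ?_⟩
  rintro _ ⟨ε, rfl⟩ r ⟨hr0, hr⟩
  obtain ⟨n, hle, hlt⟩ := exists_succ_le_lt_of_tendsto_zero hs.tendsto_atTop_zero hr0 hr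
  refine ⟨_, ?_, mem_range_self (Function.update ε (n + 1) (!ε (n + 1)))⟩
  have hdist := abs_digitSum_update_not_sub ht hs ε (n + 1)
  rw [← Real.dist_eq, ← Complex.isometry_ofReal.dist_eq, hsucc] at hdist
  refine ⟨?_, ?_⟩ <;> dsimp only <;> rw [hdist]
  · exact (one_mul (r ^ α)).trans_le (Real.rpow_le_rpow hr0.le hlt.le hα)
  · exact hsucc n ▸ hle

theorem dimH_range_digitSum
    (hsmall : ∀ d : ℝ, 0 < d →
      Tendsto (fun n : ℕ => (2 : ℝ) ^ n * (∑' k, t (k + n)) ^ d) atTop (𝓝 0)) :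
    dimH (range (digitSum t)) = 0 := by
  have htail (n : ℕ) : 0 ≤ ∑' k, t (k + n) := tsum_nonneg fun k => ht _
  refine dimH_eq_zero_of_finite_covers (ι := fun n => Fin n → Bool)
    (fun n σ => digitSum t '' {ε | ∀ k : Fin n, ε k = σ k})
    (fun n => ENNReal.ofReal (∑' k, t (k + n))) ?_ ?_ ?_ fun d hd => ?_
  · simpa using ENNReal.tendsto_ofReal (tendsto_sum_nat_add t)
  · rintro n σ
    refine ediam_le ?_
    rintro _ ⟨ε, hε, rfl⟩ _ ⟨ε', hε', rfl⟩
    rw [edist_dist, Real.dist_eq]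
    exact ENNReal.ofReal_le_ofReal
      (abs_digitSum_sub_le ht hs fun k hk => (hε ⟨k, hk⟩).trans (hε' ⟨k, hk⟩).symm)
  · rintro n _ ⟨ε, rfl⟩
    exact mem_iUnion.2 ⟨fun k => ε k, ε, fun _ => rfl, rfl⟩
  · convert ENNReal.tendsto_ofReal (hsmall d hd) using 2 with n
    · rw [ENNReal.ofReal_mul (by positivity), ENNReal.ofReal_rpow_of_nonneg (htail n) hd.le]
      simp
    · simp

end DigitSum

-- `iterRpow α n = 2 ^ (-α ^ n)`
noncomputable def iterRpow (α : ℝ) : ℕ → ℝ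
  | 0 => 2⁻¹
  | n + 1 => iterRpow α n ^ α

section IterRpow

variable {α : ℝ}

theorem iterRpow_pos (n : ℕ) : 0 < iterRpow α n := by
  induction n with
  | zero => norm_num [iterRpow]
  | succ n ih => exact Real.rpow_pos_of_pos ih α

theorem iterRpow_le_half (hα : 1 ≤ α) (n : ℕ) : iterRpow α n ≤ 2⁻¹ := by
  induction n with
  | zero => rfl
  | succ n ih =>
    calc iterRpow α n ^ α ≤ iterRpow α n ^ (1 : ℝ) :=
          Real.rpow_le_rpow_of_exponent_ge (iterRpow_pos n) (ih.trans (by norm_num)) hα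
      _ ≤ 2⁻¹ := by rwa [Real.rpow_one]

theorem iterRpow_succ_le (hα : 1 ≤ α) (n : ℕ) :
    iterRpow α (n + 1) ≤ (2⁻¹ : ℝ) ^ (α - 1) * iterRpow α n := by
  have hpos := iterRpow_pos (α := α) n
  calc iterRpow α n ^ α = iterRpow α n ^ (α - 1) * iterRpow α n := by
        rw [Real.rpow_sub_one hpos.ne', div_mul_cancel₀ _ hpos.ne']
    _ ≤ (2⁻¹ : ℝ) ^ (α - 1) * iterRpow α n := by
        gcongr
        exact iterRpow_le_half hα n

theorem iterRpow_add_le (hα : 1 ≤ α) (n k : ℕ) :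
    iterRpow α (n + k) ≤ ((2⁻¹ : ℝ) ^ (α - 1)) ^ k * iterRpow α n := by
  induction k with
  | zero => simp
  | succ k ih =>
    calc iterRpow α (n + k + 1) ≤ (2⁻¹ : ℝ) ^ (α - 1) * iterRpow α (n + k) :=
          iterRpow_succ_le hα _
      _ ≤ (2⁻¹ : ℝ) ^ (α - 1) * (((2⁻¹ : ℝ) ^ (α - 1)) ^ k * iterRpow α n) := by gcongr
      _ = ((2⁻¹ : ℝ) ^ (α - 1)) ^ (k + 1) * iterRpow α n := by ring

variable (hα : 1 < α)
include hα

theorem rpow_half_sub_one_lt_one : (2⁻¹ : ℝ) ^ (α - 1) < 1 :=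
  Real.rpow_lt_one (by norm_num) (by norm_num) (by linarith)

theorem summable_iterRpow : Summable (iterRpow α) := by
  refine ((summable_geometric_of_lt_one (by positivity) (rpow_half_sub_one_lt_one hα)).mul_right
    (iterRpow α 0)).of_nonneg_of_le (fun n => (iterRpow_pos n).le) fun k => ?_
  simpa using iterRpow_add_le hα.le 0 k

theorem tsum_iterRpow_add_le (n : ℕ) :
    ∑' k, iterRpow α (k + n) ≤ (1 - (2⁻¹ : ℝ) ^ (α - 1))⁻¹ * iterRpow α n := by
  have hgeom := summable_geometric_of_lt_one (by positivity) (rpow_half_sub_one_lt_one hα)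
  calc ∑' k, iterRpow α (k + n) ≤ ∑' k, ((2⁻¹ : ℝ) ^ (α - 1)) ^ k * iterRpow α n :=
        ((summable_nat_add_iff n).2 (summable_iterRpow hα)).tsum_le_tsum
          (fun k => add_comm k n ▸ iterRpow_add_le hα.le n k) (hgeom.mul_right _)
    _ = (1 - (2⁻¹ : ℝ) ^ (α - 1))⁻¹ * iterRpow α n := by
        rw [tsum_mul_right, tsum_geometric_of_lt_one (by positivity) (rpow_half_sub_one_lt_one hα)]

theorem tendsto_two_pow_mul_iterRpow_rpow {c d : ℝ} (hc : 0 < c) (hd : 0 < d) :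
    Tendsto (fun n : ℕ => (2 : ℝ) ^ n * (c * iterRpow α n) ^ d) atTop (𝓝 0) := by
  set f : ℕ → ℝ := fun n => (2 : ℝ) ^ n * (c * iterRpow α n) ^ d
  have hf (n : ℕ) : 0 < f n := by have := iterRpow_pos (α := α) n; positivity
  have hratio (n : ℕ) : f (n + 1) / f n = 2 * (iterRpow α n ^ (α - 1)) ^ d := by
    have hpos := iterRpow_pos (α := α) n
    rw [div_eq_iff (hf n).ne']
    simp only [f, iterRpow]
    rw [← div_mul_cancel₀ (iterRpow α n ^ α) hpos.ne', ← Real.rpow_sub_one hpos.ne',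
      mul_left_comm, Real.mul_rpow (by positivity) (by positivity), pow_succ]
    ring
  refine (summable_of_ratio_test_tendsto_lt_one zero_lt_one (.of_forall fun n => (hf n).ne') ?_
    ).tendsto_atTop_zero
  simp only [Real.norm_eq_abs, abs_of_pos (hf _), hratio]
  have hlim := ((summable_iterRpow hα).tendsto_atTop_zero.rpow_const (Or.inr (sub_pos.2 hα).le)
    ).rpow_const (Or.inr hd.le)
  simpa [Real.zero_rpow (sub_pos.2 hα).ne', Real.zero_rpow hd.ne'] using hlim.const_mul 2

theorem tendsto_two_pow_mul_tsum_iterRpow_add_rpow {d : ℝ} (hd : 0 < d) :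
    Tendsto (fun n : ℕ => (2 : ℝ) ^ n * (∑' k, iterRpow α (k + n)) ^ d) atTop (𝓝 0) := by
  have htail (n : ℕ) : 0 ≤ ∑' k, iterRpow α (k + n) :=
    tsum_nonneg fun k => (iterRpow_pos _).le
  refine squeeze_zero (fun n => mul_nonneg (by positivity) (Real.rpow_nonneg (htail n) d))
    (fun n => mul_le_mul_of_nonneg_left
      (Real.rpow_le_rpow (htail n) (tsum_iterRpow_add_le hα n) hd.le) (by positivity))
    (tendsto_two_pow_mul_iterRpow_rpow hα ?_ hd)
  exact inv_pos.2 (sub_pos.2 (rpow_half_sub_one_lt_one hα))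

end IterRpow

theorem stmt_18 (α : ℝ) (hα : 1 < α) :
    ∃ E : Set ℂ, E.Nonempty ∧ IsCompact E ∧ dimH E = 0 ∧ CondU1 E α := by
  have ht (n : ℕ) : 0 ≤ iterRpow α n := (iterRpow_pos n).le
  have hs := summable_iterRpow hα
  refine ⟨range fun ε => (digitSum (iterRpow α) ε : ℂ), range_nonempty _,
    isCompact_range (Complex.continuous_ofReal.comp (continuous_digitSum ht hs)), ?_,
    condU1_range_digitSum ht hs (by linarith) (iterRpow_pos 0) fun n => rfl⟩
  rw [range_comp', Complex.isometry_ofReal.dimH_image]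
  exact dimH_range_digitSum ht hs fun d hd => tendsto_two_pow_mul_tsum_iterRpow_add_rpow hα hd
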